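/- arXiv:1903.07095 — 8 statements merged into one kernel-verified Lean document; each statement's English description precedes it below -/
import Mathlib

section
/- Let N ≥ 3 be an integer and let m(z) := ⌈-N·arg(z)/(2π)⌉ for nonzero complex z, where arg(z) ∈ [-π, π). If z is a nonzero complex number with m(z) + m(z⁻¹) ≡ 0 (mod N), then m(z·w) ≡ m(z) + m(w) (mod N) for every nonzero complex number w. -/
/-- The principal argument of a nonzero complex number, normalized to lie in `[-π, π)`. -/
noncomputable def parg (z : ℂ) : ℝ :=
  if Complex.arg z = Real.pi then -Real.pi else Complex.arg z

/-- `m(z) := ⌈-N·arg(z)/(2π)⌉` where `arg(z) ∈ [-π, π)`. -/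
noncomputable def mfun (N : ℤ) (z : ℂ) : ℤ :=
  ⌈(-(N : ℝ) * parg z) / (2 * Real.pi)⌉

/-!
With `x := -N·parg z/(2π)`, additivity of `arg` modulo `2π` gives `m(zw) ≡ ⌈x + y⌉` and
`m(z⁻¹) ≡ ⌈-x⌉` modulo `N`, where `y := -N·parg w/(2π)`. As `⌈x⌉ + ⌈-x⌉ = ⌈x⌉ - ⌊x⌋` is `0` or `1`,
the hypothesis forces `x ∈ ℤ` unless `N ∣ 1`, and then `⌈x + y⌉ = x + ⌈y⌉`.
-/

open Complex Real

lemma coe_parg (u : ℂ) : (parg u : Real.Angle) = arg u := by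
  unfold parg
  split_ifs with h
  · rw [h, Real.Angle.coe_neg, Real.Angle.neg_coe_pi]
  · rfl

lemma mfun_modEq_of_coe_arg_eq (N : ℤ) {u : ℂ} {t : ℝ} (h : (arg u : Real.Angle) = t) :
    mfun N u ≡ ⌈-N * t / (2 * π)⌉ [ZMOD N] := by
  obtain ⟨k, hk⟩ := Real.Angle.angle_eq_iff_two_pi_dvd_sub.1 ((coe_parg u).trans h)
  have hshift : -N * parg u / (2 * π) = -N * t / (2 * π) + ((-(N * k) : ℤ) : ℝ) := by
    rw [eq_add_of_sub_eq' hk]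
    push_cast
    field_simp
    ring
  rw [mfun, hshift, Int.ceil_add_intCast]
  exact Int.modEq_iff_dvd.2 ⟨k, by ring⟩

lemma mem_range_intCast_of_ceil_add_ceil_neg_modEq {N : ℤ} (hN : ¬ N ∣ 1) {x : ℝ}
    (h : ⌈x⌉ + ⌈-x⌉ ≡ 0 [ZMOD N]) : x ∈ Set.range ((↑) : ℤ → ℝ) := by
  by_contra hx
  rw [Int.ceil_neg, (Int.ceil_eq_floor_add_one_iff_notMem x).2 hx, add_neg_cancel_comm] at h
  exact hN (Int.modEq_zero_iff_dvd.1 h)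

theorem stmt1_general (N : ℤ) (z : ℂ) (hz : z ≠ 0)
    (h : mfun N z + mfun N z⁻¹ ≡ 0 [ZMOD N]) :
    ∀ w : ℂ, w ≠ 0 → mfun N (z * w) ≡ mfun N z + mfun N w [ZMOD N] := by
  intro w hw
  by_cases hN1 : N ∣ 1
  · exact Int.modEq_iff_dvd.2 (hN1.trans (one_dvd _))
  have hinv : mfun N z⁻¹ ≡ ⌈-(-N * parg z / (2 * π))⌉ [ZMOD N] := by
    have := mfun_modEq_of_coe_arg_eq N (u := z⁻¹) (t := -parg z)
      (by rw [Real.Angle.coe_neg, coe_parg, arg_inv_coe_angle])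
    rwa [mul_neg, neg_div] at this
  obtain ⟨a, hza⟩ := mem_range_intCast_of_ceil_add_ceil_neg_modEq hN1
    (h.symm.trans (hinv.add_left _)).symm
  calc mfun N (z * w) ≡ ⌈-N * (parg z + parg w) / (2 * π)⌉ [ZMOD N] :=
        mfun_modEq_of_coe_arg_eq N
          (by rw [Real.Angle.coe_add, coe_parg, coe_parg, arg_mul_coe_angle hz hw])
    _ = ⌈(a : ℝ) + -N * parg w / (2 * π)⌉ := by rw [hza]; ring_nf
    _ = mfun N z + mfun N w := by rw [Int.ceil_intCast_add, mfun, ← hza, Int.ceil_intCast, mfun]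

theorem stmt1 (N : ℤ) (hN : 3 ≤ N) (z : ℂ) (hz : z ≠ 0)
    (h : mfun N z + mfun N z⁻¹ ≡ 0 [ZMOD N]) :
    ∀ w : ℂ, w ≠ 0 → mfun N (z * w) ≡ mfun N z + mfun N w [ZMOD N] :=
  stmt1_general N z hz h
end

section
/- Let N ≥ 3 be an integer and let m(z) := ⌈-N·arg(z)/(2π)⌉ for nonzero complex z, where arg(z) ∈ [-π, π). Let u, v, w be nonzero complex numbers. If m(u⁻¹v) + m(v⁻¹w) ≡ m(w) - m(u) (mod N), then m(u⁻¹w) ≡ m(w) - m(u) (mod N). -/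
open Real

lemma parg_coe_angle (z : ℂ) : (parg z : Angle) = (Complex.arg z : Angle) := by
  unfold parg
  split_ifs with h
  · rw [h, Angle.coe_neg, Angle.neg_coe_pi]
  · rfl

lemma parg_inv_mul_coe_angle {a b : ℂ} (ha : a ≠ 0) (hb : b ≠ 0) :
    (parg (a⁻¹ * b) : Angle) = ((parg b - parg a : ℝ) : Angle) := by
  rw [parg_coe_angle, Complex.arg_mul_coe_angle (inv_ne_zero ha) hb, Complex.arg_inv_coe_angle,
    Angle.coe_sub, parg_coe_angle, parg_coe_angle]
  abel

noncomputable def ceilAngle (N : ℤ) (t : ℝ) : ℤ :=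
  ⌈(-(N : ℝ) * t) / (2 * π)⌉

lemma mfun_eq_ceilAngle (N : ℤ) (z : ℂ) : mfun N z = ceilAngle N (parg z) := rfl

lemma ceilAngle_add_two_pi_mul (N : ℤ) (t : ℝ) (k : ℤ) :
    ceilAngle N (t + 2 * π * k) = ceilAngle N t - N * k := by
  have h : (-(N : ℝ) * (t + 2 * π * k)) / (2 * π)
      = (-(N : ℝ) * t) / (2 * π) - ((N * k : ℤ) : ℝ) := by
    push_cast
    field_simp
    ring
  rw [ceilAngle, h, Int.ceil_sub_intCast, ceilAngle]

lemma ceilAngle_eq_of_coe_angle_eq {N : ℤ} {s t : ℝ} (h : (s : Angle) = (t : Angle)) :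
    ceilAngle N s ≡ ceilAngle N t [ZMOD N] := by
  obtain ⟨k, hk⟩ := Angle.angle_eq_iff_two_pi_dvd_sub.mp h
  rw [show s = t + 2 * π * k by linarith, ceilAngle_add_two_pi_mul]
  exact Int.modEq_iff_dvd.mpr ⟨k, by ring⟩

lemma mfun_inv_mul_modEq (N : ℤ) {a b : ℂ} (ha : a ≠ 0) (hb : b ≠ 0) :
    mfun N (a⁻¹ * b) ≡ ceilAngle N (parg b - parg a) [ZMOD N] :=
  ceilAngle_eq_of_coe_angle_eq (parg_inv_mul_coe_angle ha hb)

lemma ceilAngle_add_le (N : ℤ) (s t : ℝ) :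
    ceilAngle N (s + t) ≤ ceilAngle N s + ceilAngle N t := by
  unfold ceilAngle
  rw [mul_add, add_div]
  exact Int.ceil_add_le _ _

lemma ceilAngle_add_le_add_one (N : ℤ) (s t : ℝ) :
    ceilAngle N s + ceilAngle N t ≤ ceilAngle N (s + t) + 1 := by
  unfold ceilAngle
  rw [mul_add, add_div]
  exact Int.ceil_add_ceil_le _ _

theorem stmt3 (N : ℤ) (hN : 3 ≤ N) (u v w : ℂ) (hu : u ≠ 0) (hv : v ≠ 0) (hw : w ≠ 0)
    (h : mfun N (u⁻¹ * v) + mfun N (v⁻¹ * w) ≡ mfun N w - mfun N u [ZMOD N]) :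
    mfun N (u⁻¹ * w) ≡ mfun N w - mfun N u [ZMOD N] := by
  set α := parg u
  set β := parg v
  set γ := parg w
  have hsplit₁ : (β - α) + (γ - β) = γ - α := by ring
  have hsplit₂ : (γ - α) + α = γ := by ring
  have h₁ := ceilAngle_add_le N (β - α) (γ - β)
  have h₁' := ceilAngle_add_le_add_one N (β - α) (γ - β)
  have h₂ := ceilAngle_add_le N (γ - α) α
  have h₂' := ceilAngle_add_le_add_one N (γ - α) α
  rw [hsplit₁] at h₁ h₁'
  rw [hsplit₂] at h₂ h₂'
  rw [mfun_eq_ceilAngle N w, mfun_eq_ceilAngle N u] at h ⊢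
  have hsum :
      ceilAngle N (β - α) + ceilAngle N (γ - β) ≡ ceilAngle N γ - ceilAngle N α [ZMOD N] :=
    ((mfun_inv_mul_modEq N hu hv).symm.add (mfun_inv_mul_modEq N hv hw).symm).trans h
  have hdefect :
      ceilAngle N (β - α) + ceilAngle N (γ - β) - (ceilAngle N γ - ceilAngle N α) = 0 :=
    Int.eq_zero_of_dvd_of_nonneg_of_lt (n := N) (by omega) (by omega) hsum.symm.dvd
  have hclaim : ceilAngle N (γ - α) = ceilAngle N γ - ceilAngle N α := by omega
  exact (mfun_inv_mul_modEq N hu hw).trans (hclaim ▸ Int.ModEq.refl _)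
end

section
/- Let N ≥ 3 be an integer, m(z) := ⌈-N·arg(z)/(2π)⌉ with arg(z) ∈ [-π, π), and for t ∈ ℤ let S_t := exp(2πit/N)·S_0 with S_0 := {z ∈ ℂ, z ≠ 0 : arg(z) ∈ [-π/(2N), 5π/(2N))} and A_t := exp(2πit/N)·A_0 with A_0 := {z ∈ ℂ, z ≠ 0 : arg(z) ∈ [-π/(2N), π/(2N)]}. Then for every nonzero complex number z and all integers t, k: z·A_t ⊆ S_k if and only if m(z) ≡ t - k (mod N). -/
/-- The rotation `exp(2πit/N)`. -/
noncomputable def rot (N t : ℤ) : ℂ :=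
  Complex.exp (2 * Real.pi * Complex.I * (t : ℂ) / (N : ℂ))

/-- The sector `S₀ = {z ≠ 0 : arg z ∈ [-π/(2N), 5π/(2N))}`. -/
noncomputable def S0 (N : ℤ) : Set ℂ :=
  {z | z ≠ 0 ∧ parg z ∈ Set.Ico (-(Real.pi / (2 * (N : ℝ)))) (5 * Real.pi / (2 * (N : ℝ)))}

/-- The sector `S_t := exp(2πit/N)·S₀`. -/
noncomputable def Ssec (N t : ℤ) : Set ℂ := (fun w => rot N t * w) '' S0 N

/-- The arm `A₀ = {z ≠ 0 : arg z ∈ [-π/(2N), π/(2N)]}`. -/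
noncomputable def A0 (N : ℤ) : Set ℂ :=
  {z | z ≠ 0 ∧ parg z ∈ Set.Icc (-(Real.pi / (2 * (N : ℝ)))) (Real.pi / (2 * (N : ℝ)))}

/-- The arm `A_t := exp(2πit/N)·A₀`. -/
noncomputable def Aarm (N t : ℤ) : Set ℂ := (fun w => rot N t * w) '' A0 N

/-!
Rotating back by `rot N k`, the inclusion `z·A_t ⊆ S_k` says `v·A₀ ⊆ S₀` for
`v = rot N (t - k) * z`. The arm has half-width `δ = π/(2N)` and `S₀` is `[-δ, 5δ)`; since
`6δ ≤ π` no wrap-around by `2π` can occur, so this holds iff `arg v ∈ [0, 4δ) = [0, 2π/N)`, i.e.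
`⌊N arg v / 2π⌋ = 0`. Multiplying by `rot N j` shifts `N arg / 2π` by `j` modulo `N`, and
`|⌊N arg v / 2π⌋| < N`, so this floor vanishes iff `m(z) = -⌊N arg z / 2π⌋ ≡ t - k`.
-/

open Real

theorem Real.Angle.eq_of_coe_eq_of_abs_sub_lt {x y : ℝ} (h : (x : Angle) = y)
    (hxy : |x - y| < 2 * π) : x = y := by
  obtain ⟨k, hk⟩ := Angle.angle_eq_iff_two_pi_dvd_sub.mp h
  rw [hk, abs_mul, abs_of_pos two_pi_pos, mul_lt_iff_lt_one_right two_pi_pos] at hxy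
  have hk0 : k = 0 := Int.abs_lt_one_iff.mp (by exact_mod_cast hxy)
  rw [hk0, Int.cast_zero, mul_zero, sub_eq_zero] at hk
  exact hk

lemma parg_mem_Ico (z : ℂ) : parg z ∈ Set.Ico (-π) π := by
  obtain ⟨h₁, h₂⟩ := Complex.arg_mem_Ioc z
  unfold parg
  split_ifs with h
  · exact ⟨le_rfl, by linarith [pi_pos]⟩
  · exact ⟨h₁.le, lt_of_le_of_ne h₂ h⟩

lemma coe_parg_s5 (z : ℂ) : (parg z : Angle) = Complex.arg z := by
  unfold parg
  split_ifs with h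
  · rw [h, Angle.coe_neg, Angle.neg_coe_pi]
  · rfl

lemma abs_sub_lt_two_pi_of_mem_Ico {x y : ℝ} (hx : x ∈ Set.Ico (-π) π) (hy : y ∈ Set.Ico (-π) π) :
    |x - y| < 2 * π := by
  rw [abs_sub_lt_iff]; constructor <;> linarith [hx.1, hx.2, hy.1, hy.2]

lemma parg_mul_of_abs_sub_lt {z w : ℂ} (hz : z ≠ 0) (hw : w ≠ 0)
    (h : |parg (z * w) - (parg z + parg w)| < 2 * π) : parg (z * w) = parg z + parg w := by
  refine Angle.eq_of_coe_eq_of_abs_sub_lt ?_ h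
  rw [Angle.coe_add, coe_parg_s5, coe_parg_s5, coe_parg_s5, Complex.arg_mul_coe_angle hz hw]

lemma parg_exp_mul_I {φ : ℝ} (hφ : φ ∈ Set.Ico (-π) π) :
    parg (Complex.exp (φ * Complex.I)) = φ := by
  refine Angle.eq_of_coe_eq_of_abs_sub_lt ?_ (abs_sub_lt_two_pi_of_mem_Ico (parg_mem_Ico _) hφ)
  rw [coe_parg_s5, Complex.arg_exp_mul_I, Angle.coe_toIocMod]

lemma rot_eq_exp (N j : ℤ) : rot N j = Complex.exp ((2 * π * j / N : ℝ) * Complex.I) := by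
  unfold rot; congr 1; push_cast; ring

lemma rot_ne_zero (N j : ℤ) : rot N j ≠ 0 := Complex.exp_ne_zero _

lemma rot_add (N a b : ℤ) : rot N (a + b) = rot N a * rot N b := by
  unfold rot
  rw [← Complex.exp_add]
  push_cast
  ring_nf

lemma exists_parg_rot_mul (N j : ℤ) {z : ℂ} (hz : z ≠ 0) :
    ∃ c : ℤ, parg (rot N j * z) = parg z + 2 * π * j / N + 2 * π * c := by
  have h : (parg (rot N j * z) : Angle) = (parg z + 2 * π * j / N : ℝ) := by
    rw [coe_parg_s5, Complex.arg_mul_coe_angle (rot_ne_zero N j) hz, rot_eq_exp,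
      Complex.arg_exp_mul_I, Angle.coe_toIocMod, Angle.coe_add, coe_parg_s5, add_comm]
  obtain ⟨c, hc⟩ := Angle.angle_eq_iff_two_pi_dvd_sub.mp h
  exact ⟨c, by linarith⟩

lemma mem_Ssec_iff {N k : ℤ} {w : ℂ} : w ∈ Ssec N k ↔ rot N (-k) * w ∈ S0 N := by
  have hinv : rot N (-k) * rot N k = 1 := by
    rw [← rot_add, neg_add_cancel, rot_eq_exp]; simp
  constructor
  · rintro ⟨s, hs, rfl⟩
    rwa [← mul_assoc, hinv, one_mul]
  · intro h
    refine ⟨rot N (-k) * w, h, ?_⟩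
    change rot N k * (rot N (-k) * w) = w
    rw [← mul_assoc, mul_comm (rot N k), hinv, one_mul]

lemma image_mul_Aarm_subset_Ssec_iff (N t k : ℤ) (z : ℂ) :
    (fun w => z * w) '' Aarm N t ⊆ Ssec N k ↔ ∀ a ∈ A0 N, rot N (t - k) * z * a ∈ S0 N := by
  have hrot : rot N (t - k) = rot N (-k) * rot N t := by rw [← rot_add]; ring_nf
  simp only [Aarm, Set.image_image, Set.subset_def, Set.forall_mem_image, mem_Ssec_iff, hrot]
  refine forall₂_congr fun a _ => ?_
  ring_nf

lemma forall_mem_A0_mul_mem_S0_iff {N : ℤ} (hN : 3 ≤ N) {v : ℂ} (hv : v ≠ 0) :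
    (∀ a ∈ A0 N, v * a ∈ S0 N) ↔ 0 ≤ parg v ∧ parg v < 2 * π / N := by
  have hN' : (3 : ℝ) ≤ N := by exact_mod_cast hN
  set δ := π / (2 * (N : ℝ)) with hδ_def
  have hδ : 0 < δ := by positivity
  have h6δ : 6 * δ ≤ π := by
    rw [hδ_def, ← mul_div_assoc, div_le_iff₀ (by positivity)]; nlinarith [pi_pos]
  have h4δ : 2 * π / N = 4 * δ := by rw [hδ_def]; field_simp; ring
  have h5δ : 5 * π / (2 * (N : ℝ)) = 5 * δ := by rw [hδ_def]; ring
  have hv' := parg_mem_Ico v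
  have hsum : ∀ a ∈ A0 N, parg (v * a) ∈ Set.Ico (-δ) (5 * δ) ∨ parg v ∈ Set.Ico 0 (4 * δ) →
      parg (v * a) = parg v + parg a := by
    rintro a ⟨ha, ha₁, ha₂⟩ h
    have hva := parg_mem_Ico (v * a)
    refine parg_mul_of_abs_sub_lt hv ha (abs_sub_lt_iff.mpr ?_)
    rcases h with h | h <;> constructor <;> linarith [h.1, h.2, hv'.1, hv'.2, hva.1, hva.2]
  simp only [S0, A0, h5δ, h4δ, ← hδ_def, Set.mem_Ico, Set.mem_ofPred_eq]
  constructor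
  · intro h
    have hexp : ∀ φ ∈ Set.Icc (-δ) δ, ∃ a ∈ A0 N, parg a = φ := by
      intro φ hφ
      have hpa := parg_exp_mul_I (φ := φ) ⟨by linarith [hφ.1], by linarith [hφ.2]⟩
      exact ⟨_, ⟨Complex.exp_ne_zero _, by rwa [hpa]⟩, hpa⟩
    obtain ⟨a₁, ha₁, hpa₁⟩ := hexp δ ⟨by linarith, le_rfl⟩
    obtain ⟨a₂, ha₂, hpa₂⟩ := hexp (-δ) ⟨le_rfl, by linarith⟩
    have h₁ := (h a₁ ha₁).2
    have h₂ := (h a₂ ha₂).2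
    rw [hsum a₁ ha₁ (.inl h₁), hpa₁] at h₁
    rw [hsum a₂ ha₂ (.inl h₂), hpa₂] at h₂
    constructor <;> linarith [h₁.1, h₂.2]
  · rintro hv₀ a ⟨ha, ha₁, ha₂⟩
    refine ⟨mul_ne_zero hv ha, ?_⟩
    rw [hsum a ⟨ha, ha₁, ha₂⟩ (.inr hv₀)]
    constructor <;> linarith [hv₀.1, hv₀.2]

lemma floor_mul_div_two_pi_eq_zero_iff {N θ : ℝ} (hN : 0 < N) :
    ⌊N * θ / (2 * π)⌋ = 0 ↔ 0 ≤ θ ∧ θ < 2 * π / N := by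
  rw [Int.floor_eq_zero_iff, Set.mem_Ico, le_div_iff₀ two_pi_pos, div_lt_one two_pi_pos,
    lt_div_iff₀ hN, zero_mul, mul_comm θ]
  exact and_congr (mul_nonneg_iff_of_pos_left hN) Iff.rfl

lemma abs_floor_mul_parg_div_two_pi_lt {N : ℤ} (hN : 2 ≤ N) (w : ℂ) :
    |⌊N * parg w / (2 * π)⌋| < N := by
  have hN' : (2 : ℝ) ≤ N := by exact_mod_cast hN
  obtain ⟨hw₁, hw₂⟩ := parg_mem_Ico w
  have hlo : -(N : ℝ) / 2 ≤ N * parg w / (2 * π) := by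
    rw [le_div_iff₀ two_pi_pos]; nlinarith
  have hhi : N * parg w / (2 * π) < N / 2 := by
    rw [div_lt_iff₀ two_pi_pos]; nlinarith [pi_pos]
  have h₁ := Int.floor_le (N * parg w / (2 * π))
  have h₂ := Int.lt_floor_add_one (N * parg w / (2 * π))
  rw [abs_lt]
  constructor
  · have : (-N : ℝ) < ⌊N * parg w / (2 * π)⌋ := by linarith
    exact_mod_cast this
  · have : (⌊N * parg w / (2 * π)⌋ : ℝ) < N := by linarith
    exact_mod_cast this

lemma mfun_eq_neg_floor (N : ℤ) (z : ℂ) : mfun N z = -⌊N * parg z / (2 * π)⌋ := by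
  rw [mfun, neg_mul, neg_div, Int.ceil_neg]

lemma parg_rot_mul_nonneg_and_lt_iff {N : ℤ} (hN : 2 ≤ N) (j : ℤ) {z : ℂ} (hz : z ≠ 0) :
    (0 ≤ parg (rot N j * z) ∧ parg (rot N j * z) < 2 * π / N) ↔ mfun N z ≡ j [ZMOD N] := by
  have hN' : (0 : ℝ) < N := by exact_mod_cast (by omega : 0 < N)
  obtain ⟨c, hc⟩ := exists_parg_rot_mul N j hz
  have hfloor : ⌊N * parg (rot N j * z) / (2 * π)⌋ = ⌊N * parg z / (2 * π)⌋ + (j + N * c) := by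
    rw [hc, ← Int.floor_add_intCast]
    congr 1
    push_cast
    field_simp
    ring
  rw [← floor_mul_div_two_pi_eq_zero_iff hN', mfun_eq_neg_floor, Int.modEq_iff_dvd]
  constructor
  · intro h
    exact ⟨-c, by linarith⟩
  · intro h
    refine Int.eq_zero_of_abs_lt_dvd ?_ (abs_floor_mul_parg_div_two_pi_lt hN _)
    have hsplit : ⌊N * parg z / (2 * π)⌋ + (j + N * c) = j - -⌊N * parg z / (2 * π)⌋ + N * c := by
      ring
    rw [hfloor, hsplit]
    exact dvd_add h (dvd_mul_right _ _)

theorem stmt5 (N : ℤ) (hN : 3 ≤ N) (z : ℂ) (hz : z ≠ 0) (t k : ℤ) :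
    ((fun w => z * w) '' Aarm N t ⊆ Ssec N k) ↔ mfun N z ≡ t - k [ZMOD N] := by
  rw [image_mul_Aarm_subset_Ssec_iff,
    forall_mem_A0_mul_mem_S0_iff hN (mul_ne_zero (rot_ne_zero N (t - k)) hz),
    parg_rot_mul_nonneg_and_lt_iff (by omega) (t - k) hz]
end

section
/- Let r ≥ 1, let σ be a permutation of {1,...,r}, let c_1, ..., c_{r+1} be real numbers, let p ∈ {1,...,r+1}, and let δ be a nonzero real number. In ℝ^{r+1} with standard basis e_1, ..., e_{r+1}, define φ_t := Σ_{j=2}^{t} e_{σ(j-1)} + c_t·e_{r+1} for 1 ≤ t ≤ r+1 (so φ_1 = c_1·e_{r+1}), and φ_{r+2} := φ_p + δ·e_{r+1}. Then the r+2 vectors φ_1, ..., φ_{r+2} are affinely independent in ℝ^{r+1}. -/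
/-!
Dropping the last coordinate sends `φ_1, …, φ_{r+1}` to the partial sums
`0, e_{σ 1}, e_{σ 1} + e_{σ 2}, …` of the linearly independent vectors `e_{σ j}`,
whose affine span has the full dimension `r`.
So the `φ_t` are affinely independent and the projection is injective on their affine span;
`φ_{r+2}` has the same projection as `φ_p` without being equal to it, hence lies off that span.
-/

/-- `φ_t := Σ_{j=2}^{t} e_{σ(j-1)} + c_t·e_{r+1}` for `1 ≤ t ≤ r+1`, written 0-indexed:
for `t : Fin (r+1)`, `psi r σ c t = Σ_{j : Fin r, j < t} e_{(σ j).castSucc} + c t • e_{last}`. -/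
noncomputable def psi (r : ℕ) (σ : Equiv.Perm (Fin r)) (c : Fin (r + 1) → ℝ)
    (t : Fin (r + 1)) : Fin (r + 1) → ℝ :=
  (∑ j : Fin r, if (j : ℕ) < (t : ℕ) then Pi.single ((σ j).castSucc) (1 : ℝ) else 0)
    + c t • (Pi.single (Fin.last r) (1 : ℝ) : Fin (r + 1) → ℝ)

open Finset

section

variable {k V P : Type*} [Ring k] [AddCommGroup V] [Module k V] [AddTorsor V P]

theorem AffineMap.injOn_affineSpan_of_affineIndependent {W Q ι : Type*} [AddCommGroup W]
    [Module k W] [AddTorsor W Q] [Fintype ι] {p : ι → P} (f : P →ᵃ[k] Q)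
    (hp : AffineIndependent k (f ∘ p)) :
    Set.InjOn f (affineSpan k (Set.range p)) := by
  intro x hx y hy hxy
  obtain ⟨w₁, hw₁, rfl⟩ := eq_affineCombination_of_mem_affineSpan_of_fintype hx
  obtain ⟨w₂, hw₂, rfl⟩ := eq_affineCombination_of_mem_affineSpan_of_fintype hy
  rw [map_affineCombination _ _ _ hw₁, map_affineCombination _ _ _ hw₂] at hxy
  rw [(affineIndependent_iff_eq_of_fintype_affineCombination_eq k _).1 hp w₁ w₂ hw₁ hw₂ hxy]

end

section

variable {k V P : Type*} [DivisionRing k] [AddCommGroup V] [Module k V] [AddTorsor V P]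

theorem LinearIndependent.affineIndependent_partialSums {n : ℕ} {v : Fin n → V}
    (hv : LinearIndependent k v) :
    AffineIndependent k (fun t : Fin (n + 1) => ∑ j : Fin n with j.castSucc < t, v j) := by
  rw [affineIndependent_iff_finrank_vectorSpan_eq k _ (Fintype.card_fin _)]
  suffices vectorSpan k (Set.range fun t : Fin (n + 1) => ∑ j : Fin n with j.castSucc < t, v j) =
      Submodule.span k (Set.range v) by
    rw [this, finrank_span_eq_card hv, Fintype.card_fin]
  apply le_antisymm
  · rw [vectorSpan_def, Submodule.span_le]
    rintro _ ⟨_, ⟨s, rfl⟩, _, ⟨t, rfl⟩, rfl⟩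
    exact Submodule.sub_mem _
      (Submodule.sum_mem _ fun j _ => Submodule.subset_span ⟨j, rfl⟩)
      (Submodule.sum_mem _ fun j _ => Submodule.subset_span ⟨j, rfl⟩)
  · rw [Submodule.span_le]
    rintro _ ⟨j, rfl⟩
    have hdiff : v j = (∑ i : Fin n with i.castSucc < j.succ, v i) -ᵥ
        ∑ i : Fin n with i.castSucc < j.castSucc, v i := by
      simp only [Fin.castSucc_lt_succ_iff, Fin.castSucc_lt_castSucc_iff, vsub_eq_sub]
      rw [filter_ge_eq_Iic, filter_gt_eq_Iio, Iic_eq_cons_Iio, sum_cons, add_sub_cancel_right]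
    rw [hdiff]
    exact vsub_mem_vectorSpan k (Set.mem_range_self _) (Set.mem_range_self _)

theorem AffineIndependent.snoc {n : ℕ} {p : Fin n → P} (hp : AffineIndependent k p) {x : P}
    (hx : x ∉ affineSpan k (Set.range p)) :
    AffineIndependent k (Fin.snoc p x : Fin (n + 1) → P) := by
  refine AffineIndependent.affineIndependent_of_notMem_span (i := Fin.last n) ?_ ?_
  · rw [← affineIndependent_equiv (finSuccAboveEquiv (Fin.last n))]
    convert hp
    ext j
    simp [finSuccAboveEquiv_apply]
  · refine fun h => hx (affineSpan_mono k ?_ (by simpa using h))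
    rintro _ ⟨y, hy, rfl⟩
    obtain ⟨j, rfl⟩ := Fin.exists_castSucc_eq.2 hy
    simp

end

theorem funLeft_castSucc_single_castSucc {R : Type*} [Semiring R] {n : ℕ} (i : Fin n) (a : R) :
    LinearMap.funLeft R R Fin.castSucc (Pi.single i.castSucc a) = Pi.single i a := by
  ext j
  simp [LinearMap.funLeft_apply, Pi.single_apply]

theorem funLeft_castSucc_single_last {R : Type*} [Semiring R] (n : ℕ) (a : R) :
    LinearMap.funLeft R R Fin.castSucc (Pi.single (Fin.last n) a) = 0 := by
  ext j
  simp [LinearMap.funLeft_apply, Fin.castSucc_ne_last]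

theorem funLeft_castSucc_psi (r : ℕ) (σ : Equiv.Perm (Fin r)) (c : Fin (r + 1) → ℝ)
    (t : Fin (r + 1)) :
    LinearMap.funLeft ℝ ℝ Fin.castSucc (psi r σ c t) =
      ∑ j : Fin r with j.castSucc < t, Pi.single (σ j) (1 : ℝ) := by
  simp only [psi, map_add, map_smul, map_sum, apply_ite, map_zero,
    funLeft_castSucc_single_castSucc, funLeft_castSucc_single_last, smul_zero, add_zero,
    sum_filter, Fin.lt_def, Fin.val_castSucc]

theorem stmt11_general (r : ℕ) (σ : Equiv.Perm (Fin r)) (c : Fin (r + 1) → ℝ)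
    (p : Fin (r + 1)) (δ : ℝ) (hδ : δ ≠ 0) :
    AffineIndependent ℝ
      (Fin.snoc (psi r σ c)
          (psi r σ c p + δ • (Pi.single (Fin.last r) (1 : ℝ) : Fin (r + 1) → ℝ)) :
        Fin (r + 2) → (Fin (r + 1) → ℝ)) := by
  set π := (LinearMap.funLeft ℝ ℝ (Fin.castSucc : Fin r → Fin (r + 1))).toAffineMap
  have hπψ : AffineIndependent ℝ (π ∘ psi r σ c) := by
    rw [show π ∘ psi r σ c = _ from funext (funLeft_castSucc_psi r σ c)]
    exact ((Pi.linearIndependent_single_one (Fin r) ℝ).comp σ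
      σ.injective).affineIndependent_partialSums
  refine (hπψ.of_comp π).snoc fun hmem => ?_
  have hπ : π (psi r σ c p + δ • Pi.single (Fin.last r) 1) = π (psi r σ c p) := by
    simp [π, funLeft_castSucc_single_last]
  have hψp := π.injOn_affineSpan_of_affineIndependent hπψ hmem
    (mem_affineSpan ℝ (Set.mem_range_self p)) hπ
  simp [hδ] at hψp

theorem stmt11 (r : ℕ) (hr : 1 ≤ r) (σ : Equiv.Perm (Fin r)) (c : Fin (r + 1) → ℝ)
    (p : Fin (r + 1)) (δ : ℝ) (hδ : δ ≠ 0) :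
    AffineIndependent ℝ
      (Fin.snoc (psi r σ c)
          (psi r σ c p + δ • (Pi.single (Fin.last r) (1 : ℝ) : Fin (r + 1) → ℝ)) :
        Fin (r + 2) → (Fin (r + 1) → ℝ)) :=
  stmt11_general r σ c p δ hδ
end

section
/- Let r ≥ 1, let σ be a permutation of {1,...,r}, let c_1, ..., c_{r+1} be real numbers, let p ∈ {1,...,r+1}, and let δ > 0. In ℝ^{r+1} define φ_t := Σ_{j=2}^{t} e_{σ(j-1)} + c_t·e_{r+1} for 1 ≤ t ≤ r+1 and φ_{r+2} := φ_p + δ·e_{r+1}, and set P_1 := convex hull of {φ_1,...,φ_{r+1}} and P_2 := convex hull of {φ_t : 1 ≤ t ≤ r+2, t ≠ p}. If x^{(1)}, ..., x^{(r)} ∈ [0,1] satisfy x^{(σ(1))} ≥ x^{(σ(2))} ≥ ... ≥ x^{(σ(r))}, then there exist unique real numbers y_1 and y_2 such that (x^{(1)},...,x^{(r)}, y_1) ∈ P_1 and (x^{(1)},...,x^{(r)}, y_2) ∈ P_2; moreover y_1 ≤ y_2. -/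
/-- The full family `φ_1, …, φ_{r+2}`, where `φ_{r+2} := φ_p + δ·e_{r+1}`. -/
noncomputable def phiFull (r : ℕ) (σ : Equiv.Perm (Fin r)) (c : Fin (r + 1) → ℝ)
    (p : Fin (r + 1)) (δ : ℝ) : Fin (r + 2) → (Fin (r + 1) → ℝ) :=
  Fin.snoc (psi r σ c)
    (psi r σ c p + δ • (Pi.single (Fin.last r) (1 : ℝ) : Fin (r + 1) → ℝ))

open Finset

section TailSum

variable {M : Type*} [AddCommGroup M] {n : ℕ}

def tailSum (w : Fin (n + 1) → M) (k : ℕ) : M :=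
  ∑ t ∈ univ.filter (fun t : Fin (n + 1) => k ≤ t), w t

lemma tailSum_zero (w : Fin (n + 1) → M) : tailSum w 0 = ∑ t, w t := by
  simp [tailSum]

lemma tailSum_of_lt (w : Fin (n + 1) → M) {k : ℕ} (hk : n < k) : tailSum w k = 0 :=
  sum_eq_zero fun t ht => absurd (mem_filter.1 ht).2 (by omega)

lemma tailSum_eq_add (w : Fin (n + 1) → M) (t : Fin (n + 1)) :
    tailSum w t = w t + tailSum w (t + 1) := by
  have hsplit : univ.filter (fun s : Fin (n + 1) => (t : ℕ) ≤ s) =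
      insert t (univ.filter (fun s : Fin (n + 1) => (t : ℕ) + 1 ≤ s)) := by
    ext s; simp only [mem_filter, mem_univ, true_and, mem_insert, Fin.ext_iff]; omega
  rw [tailSum, hsplit, sum_insert (by simp), tailSum]

lemma tailSum_sub_succ (a : ℕ → M) (ha : ∀ k, n < k → a k = 0) (k : ℕ) :
    tailSum (fun t : Fin (n + 1) => a t - a ((t : ℕ) + 1)) k = a k := by
  rcases le_or_gt k (n + 1) with hk | hk
  · refine Nat.decreasingInduction (motive := fun k _ => tailSum _ k = a k) ?_ ?_ hk
    · intro k hk ih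
      rw [tailSum_eq_add _ ⟨k, hk⟩, ih, sub_add_cancel]
    · rw [tailSum_of_lt _ (by omega), ha _ (by omega)]
  · rw [tailSum_of_lt _ (by omega), ha _ (by omega)]

lemma eq_sub_of_tailSum_eq {w : Fin (n + 1) → M} {a : ℕ → M} (h : ∀ k, tailSum w k = a k) :
    w = fun t : Fin (n + 1) => a t - a ((t : ℕ) + 1) := by
  funext t
  rw [← h, ← h, tailSum_eq_add, add_sub_cancel_right]

end TailSum

theorem convexHull_range_eq_image_stdSimplex {R ι E : Type*} [Field R] [LinearOrder R]
    [IsStrictOrderedRing R] [Fintype ι] [AddCommGroup E] [Module R E] (v : ι → E) :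
    convexHull R (Set.range v) = (fun w => ∑ i, w i • v i) '' stdSimplex R ι := by
  classical
  rw [← convexHull_rangle_single_eq_stdSimplex]
  have hlin : (fun w => ∑ i, w i • v i) = Fintype.linearCombination R v :=
    funext fun w => (Fintype.linearCombination_apply R v w).symm
  rw [hlin, LinearMap.image_convexHull, ← Set.range_comp]
  congr 2
  ext i
  simp

lemma sum_mul_update_add {ι R : Type*} [Fintype ι] [DecidableEq ι] [NonUnitalNonAssocSemiring R]
    (w c : ι → R) (p : ι) (δ : R) :
    ∑ t, w t * Function.update c p (c p + δ) t = ∑ t, w t * c t + w p * δ := by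
  have hsplit (t : ι) :
      w t * Function.update c p (c p + δ) t = w t * c t + if t = p then w t * δ else 0 := by
    rcases eq_or_ne t p with rfl | h
    · simp [mul_add]
    · simp [h]
  simp [hsplit, sum_add_distrib]

section Staircase

variable {r : ℕ} (σ : Equiv.Perm (Fin r)) (c : Fin (r + 1) → ℝ)

lemma psi_apply_castSucc (t : Fin (r + 1)) (i : Fin r) :
    psi r σ c t i.castSucc = if (σ.symm i : ℕ) < t then 1 else 0 := by
  have hσ (j : Fin r) : i = σ j ↔ σ.symm i = j := by rw [Equiv.symm_apply_eq]
  simp only [psi, Pi.add_apply, Finset.sum_apply, Pi.smul_apply, Pi.single_apply,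
    apply_ite (fun f : Fin (r + 1) → ℝ => f i.castSucc), Fin.castSucc_inj,
    (Fin.castSucc_lt_last i).ne, hσ, if_false, smul_zero, add_zero, Pi.zero_apply]
  rw [sum_eq_single (σ.symm i) (fun j _ hj => by simp [Ne.symm hj]) (by simp)]
  simp

lemma psi_apply_last (t : Fin (r + 1)) : psi r σ c t (Fin.last r) = c t := by
  simp [psi, Finset.sum_apply, apply_ite (fun f : Fin (r + 1) → ℝ => f (Fin.last r)),
    fun j : Fin r => (Fin.castSucc_lt_last j).ne']

lemma sum_smul_psi (w : Fin (r + 1) → ℝ) :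
    ∑ t, w t • psi r σ c t =
      Fin.snoc (fun i => tailSum w ((σ.symm i : ℕ) + 1)) (∑ t, w t * c t) := by
  funext i
  induction i using Fin.lastCases with
  | last => simp [Finset.sum_apply, psi_apply_last]
  | cast i => simp [Finset.sum_apply, psi_apply_castSucc, tailSum, sum_filter]

variable (x : Fin r → ℝ)

def stairProfile : ℕ → ℝ
  | 0 => 1
  | k + 1 => if h : k < r then x (σ ⟨k, h⟩) else 0

def stairWeight (t : Fin (r + 1)) : ℝ := stairProfile σ x t - stairProfile σ x ((t : ℕ) + 1)

lemma stairProfile_eq_zero {k : ℕ} (hk : r < k) : stairProfile σ x k = 0 := by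
  obtain ⟨k, rfl⟩ : ∃ j, k = j + 1 := ⟨k - 1, by omega⟩
  simp [stairProfile, show ¬k < r by omega]

lemma stairProfile_antitone (hx01 : ∀ i, x i ∈ Set.Icc (0 : ℝ) 1)
    (hmono : ∀ i j : Fin r, i ≤ j → x (σ j) ≤ x (σ i)) : Antitone (stairProfile σ x) := by
  refine antitone_nat_of_succ_le fun k => ?_
  rcases k with _ | k
  · simp only [stairProfile]
    split_ifs
    exacts [(hx01 _).2, zero_le_one]
  · simp only [stairProfile]
    split_ifs with h₁ h₂
    · exact hmono _ _ (Fin.mk_le_mk.2 k.le_succ)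
    · omega
    · exact (hx01 _).1
    · rfl

lemma stairWeight_nonneg (hx01 : ∀ i, x i ∈ Set.Icc (0 : ℝ) 1)
    (hmono : ∀ i j : Fin r, i ≤ j → x (σ j) ≤ x (σ i)) (t : Fin (r + 1)) :
    0 ≤ stairWeight σ x t :=
  sub_nonneg.2 (stairProfile_antitone σ x hx01 hmono (Nat.le_succ _))

lemma tailSum_stairWeight (k : ℕ) : tailSum (stairWeight σ x) k = stairProfile σ x k :=
  tailSum_sub_succ _ (fun _ => stairProfile_eq_zero σ x) k

lemma sum_stairWeight : ∑ t, stairWeight σ x t = 1 := by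
  rw [← tailSum_zero, tailSum_stairWeight]
  rfl

lemma sum_stairWeight_smul_psi :
    ∑ t, stairWeight σ x t • psi r σ c t = Fin.snoc x (∑ t, stairWeight σ x t * c t) := by
  rw [sum_smul_psi]
  congr
  funext i
  simp [tailSum_stairWeight, stairProfile]

lemma eq_stairWeight {w : Fin (r + 1) → ℝ} {y : ℝ} (hw : ∑ t, w t = 1)
    (h : ∑ t, w t • psi r σ c t = Fin.snoc x y) : w = stairWeight σ x := by
  refine eq_sub_of_tailSum_eq fun k => ?_
  rcases k with _ | k
  · exact (tailSum_zero w).trans hw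
  · rcases lt_or_ge k r with hk | hk
    · have := congrFun h (σ ⟨k, hk⟩).castSucc
      rw [sum_smul_psi, Fin.snoc_castSucc, Fin.snoc_castSucc] at this
      simpa [stairProfile, hk] using this
    · rw [tailSum_of_lt _ (by omega), stairProfile_eq_zero σ x (by omega)]

theorem snoc_mem_convexHull_range_psi_iff (hx01 : ∀ i, x i ∈ Set.Icc (0 : ℝ) 1)
    (hmono : ∀ i j : Fin r, i ≤ j → x (σ j) ≤ x (σ i)) (y : ℝ) :
    Fin.snoc x y ∈ convexHull ℝ (Set.range (psi r σ c)) ↔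
      y = ∑ t, stairWeight σ x t * c t := by
  rw [convexHull_range_eq_image_stdSimplex]
  constructor
  · rintro ⟨w, ⟨-, hw⟩, h : ∑ t, w t • psi r σ c t = _⟩
    obtain rfl := eq_stairWeight σ c x hw h
    rw [sum_stairWeight_smul_psi] at h
    simpa using (congrFun h (Fin.last r)).symm
  · rintro rfl
    exact ⟨stairWeight σ x, ⟨stairWeight_nonneg σ x hx01 hmono, sum_stairWeight σ x⟩,
      sum_stairWeight_smul_psi σ c x⟩

lemma psi_update_of_ne {p t : Fin (r + 1)} (h : t ≠ p) (v : ℝ) :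
    psi r σ (Function.update c p v) t = psi r σ c t := by
  simp [psi, Function.update_of_ne h]

lemma psi_update_add_self (p : Fin (r + 1)) (δ : ℝ) :
    psi r σ (Function.update c p (c p + δ)) p =
      psi r σ c p + δ • (Pi.single (Fin.last r) 1 : Fin (r + 1) → ℝ) := by
  simp [psi, add_smul, add_assoc]

lemma phiFull_image_ne_castSucc (p : Fin (r + 1)) (δ : ℝ) :
    phiFull r σ c p δ '' {t | t ≠ Fin.castSucc p} =
      Set.range (psi r σ (Function.update c p (c p + δ))) := by
  ext v
  constructor
  · rintro ⟨t, ht, rfl⟩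
    induction t using Fin.lastCases with
    | last => exact ⟨p, by rw [psi_update_add_self, phiFull, Fin.snoc_last]⟩
    | cast s =>
      have hs : s ≠ p := fun h => ht (congrArg Fin.castSucc h)
      exact ⟨s, by rw [psi_update_of_ne σ c hs, phiFull, Fin.snoc_castSucc]⟩
  · rintro ⟨s, rfl⟩
    by_cases hs : s = p
    · subst hs
      exact ⟨Fin.last (r + 1), (Fin.castSucc_lt_last s).ne',
        by rw [psi_update_add_self, phiFull, Fin.snoc_last]⟩
    · exact ⟨s.castSucc, fun h => hs (Fin.castSucc_injective _ h),
        by rw [psi_update_of_ne σ c hs, phiFull, Fin.snoc_castSucc]⟩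

end Staircase

theorem stmt12_general (r : ℕ) (σ : Equiv.Perm (Fin r)) (c : Fin (r + 1) → ℝ)
    (p : Fin (r + 1)) (δ : ℝ) (hδ : 0 < δ)
    (x : Fin r → ℝ) (hx01 : ∀ i, x i ∈ Set.Icc (0 : ℝ) 1)
    (hmono : ∀ i j : Fin r, i ≤ j → x (σ j) ≤ x (σ i)) :
    ∃ y₁ y₂ : ℝ,
      ((Fin.snoc x y₁ : Fin (r + 1) → ℝ) ∈ convexHull ℝ (Set.range (psi r σ c)) ∧
        ∀ y : ℝ, (Fin.snoc x y : Fin (r + 1) → ℝ) ∈ convexHull ℝ (Set.range (psi r σ c)) →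
          y = y₁) ∧
      ((Fin.snoc x y₂ : Fin (r + 1) → ℝ) ∈
          convexHull ℝ (phiFull r σ c p δ '' {t | t ≠ Fin.castSucc p}) ∧
        ∀ y : ℝ, (Fin.snoc x y : Fin (r + 1) → ℝ) ∈
            convexHull ℝ (phiFull r σ c p δ '' {t | t ≠ Fin.castSucc p}) → y = y₂) ∧
      y₁ ≤ y₂ := by
  set c' := Function.update c p (c p + δ)
  set w := stairWeight σ x
  have hP₁ := snoc_mem_convexHull_range_psi_iff σ c x hx01 hmono
  have hP₂ := snoc_mem_convexHull_range_psi_iff σ c' x hx01 hmono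
  rw [← phiFull_image_ne_castSucc] at hP₂
  refine ⟨∑ t, w t * c t, ∑ t, w t * c' t, ⟨(hP₁ _).2 rfl, fun y => (hP₁ y).1⟩,
    ⟨(hP₂ _).2 rfl, fun y => (hP₂ y).1⟩, ?_⟩
  rw [sum_mul_update_add]
  exact le_add_of_nonneg_right (mul_nonneg (stairWeight_nonneg σ x hx01 hmono p) hδ.le)

theorem stmt12 (r : ℕ) (hr : 1 ≤ r) (σ : Equiv.Perm (Fin r)) (c : Fin (r + 1) → ℝ)
    (p : Fin (r + 1)) (δ : ℝ) (hδ : 0 < δ)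
    (x : Fin r → ℝ) (hx01 : ∀ i, x i ∈ Set.Icc (0 : ℝ) 1)
    (hmono : ∀ i j : Fin r, i ≤ j → x (σ j) ≤ x (σ i)) :
    ∃ y₁ y₂ : ℝ,
      ((Fin.snoc x y₁ : Fin (r + 1) → ℝ) ∈ convexHull ℝ (Set.range (psi r σ c)) ∧
        ∀ y : ℝ, (Fin.snoc x y : Fin (r + 1) → ℝ) ∈ convexHull ℝ (Set.range (psi r σ c)) →
          y = y₁) ∧
      ((Fin.snoc x y₂ : Fin (r + 1) → ℝ) ∈
          convexHull ℝ (phiFull r σ c p δ '' {t | t ≠ Fin.castSucc p}) ∧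
        ∀ y : ℝ, (Fin.snoc x y : Fin (r + 1) → ℝ) ∈
            convexHull ℝ (phiFull r σ c p δ '' {t | t ≠ Fin.castSucc p}) → y = y₂) ∧
      y₁ ≤ y₂ :=
  stmt12_general r σ c p δ hδ x hx01 hmono
end

section
/- Let r ≥ 1 and let ε_1, ..., ε_r be elements of ℂ* × (0,∞)^r; write ε_j = (ε_j^{(1)}, ε_j^{(2)}, ..., ε_j^{(r+1)}) with ε_j^{(1)} a nonzero complex number and ε_j^{(i)} > 0 real for 2 ≤ i ≤ r+1. Assume |ε_j^{(1)}|² · ∏_{i=2}^{r+1} ε_j^{(i)} = 1 for each 1 ≤ j ≤ r. Then det(M) = (r+2)·det(M'), where M is the r×r real matrix with entries M_{ij} = log|ε_j^{(i)} / ε_j^{(r+1)}| and M' is the r×r real matrix with entries M'_{ij} = log|ε_j^{(i)}|, for 1 ≤ i, j ≤ r (here |·| denotes the complex modulus when i = 1). -/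
/-!
Write `M'` for the second matrix and `w = (2, 1, …, 1)`. Taking logarithms in the normalisation
`|ε⁽¹⁾|² ∏ ε⁽ⁱ⁾ = 1` gives `(w ᵥ* M') j = -log ε_j^{(r+1)}`, so every row of the first matrix is the
corresponding row of `M'` plus the row `w ᵥ* M'`. That is, `M = (1 + 𝟙 wᵀ) M'`, and the matrix
determinant lemma gives `det (1 + 𝟙 wᵀ) = 1 + ∑ w = r + 2`.
-/

open Matrix

theorem Matrix.det_add_replicateRow_vecMul {n R : Type*} [Fintype n] [DecidableEq n] [CommRing R]
    (M : Matrix n n R) (w : n → R) :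
    (M + replicateRow n (w ᵥ* M)).det = (1 + ∑ i, w i) * M.det := by
  have hfac : M + replicateRow n (w ᵥ* M)
      = (1 + replicateCol Unit (fun _ => (1 : R)) * replicateRow Unit w) * M := by
    rw [add_mul, Matrix.one_mul, Matrix.mul_assoc]
    congr 1
    ext i j
    simp [Matrix.mul_apply, vecMul, dotProduct]
  rw [hfac, det_mul, det_one_add_replicateCol_mul_replicateRow]
  simp [dotProduct]

theorem Real.two_mul_log_add_sum_log_eq_zero {ι : Type*} [Fintype ι] {x : ℝ} {y : ι → ℝ}
    (h : x ^ 2 * ∏ i, y i = 1) : 2 * Real.log x + ∑ i, Real.log (y i) = 0 := by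
  have hy : ∀ i, y i ≠ 0 := fun i =>
    Finset.prod_ne_zero_iff.mp (right_ne_zero_of_mul_eq_one h) i (Finset.mem_univ i)
  have hlog := congrArg Real.log h
  rw [Real.log_mul (left_ne_zero_of_mul_eq_one h) (right_ne_zero_of_mul_eq_one h), Real.log_pow,
    Real.log_prod (fun i _ => hy i), Real.log_one] at hlog
  exact_mod_cast hlog

theorem stmt14 (r : ℕ) (hr : 1 ≤ r)
    (a : Fin r → ℂ)
    (b : Fin r → Fin r → ℝ)
    (hnorm : ∀ j, (‖a j‖) ^ 2 * ∏ i : Fin r, b j i = 1) :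
    (Matrix.of fun i j : Fin r =>
        if (i : ℕ) = 0 then
          Real.log (‖a j‖ / b j ⟨r - 1, by omega⟩)
        else
          Real.log (b j ⟨(i : ℕ) - 1, by have := i.isLt; omega⟩ / b j ⟨r - 1, by omega⟩)).det
      = ((r : ℝ) + 2) *
        (Matrix.of fun i j : Fin r =>
          if (i : ℕ) = 0 then Real.log (‖a j‖)
          else Real.log (b j ⟨(i : ℕ) - 1, by have := i.isLt; omega⟩)).det := by
  obtain ⟨m, rfl⟩ : ∃ m, r = m + 1 := ⟨r - 1, by omega⟩
  set M' : Matrix (Fin (m + 1)) (Fin (m + 1)) ℝ := Matrix.of fun i j =>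
    if (i : ℕ) = 0 then Real.log (‖a j‖)
    else Real.log (b j ⟨(i : ℕ) - 1, by have := i.isLt; omega⟩) with hM'
  set w : Fin (m + 1) → ℝ := Fin.cons 2 1
  have ha : ∀ j, ‖a j‖ ≠ 0 := fun j => pow_ne_zero_iff two_ne_zero |>.mp
    (left_ne_zero_of_mul_eq_one (hnorm j))
  have hb : ∀ j i, b j i ≠ 0 := fun j i =>
    Finset.prod_ne_zero_iff.mp (right_ne_zero_of_mul_eq_one (hnorm j)) i (Finset.mem_univ i)
  have hwM' : ∀ j, (w ᵥ* M') j = -Real.log (b j (Fin.last m)) := by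
    intro j
    have := Real.two_mul_log_add_sum_log_eq_zero (hnorm j)
    rw [Fin.sum_univ_castSucc] at this
    simp only [w, hM', vecMul, dotProduct, Fin.sum_univ_succ, Fin.cons_zero, Fin.val_eq_zero_iff,
      of_apply, ↓reduceIte, Fin.cons_succ, Pi.one_apply, Fin.succ_ne_zero, Fin.val_succ,
      add_tsub_cancel_right, one_mul]
    rw [← add_assoc] at this
    exact eq_neg_of_add_eq_zero_left this
  have hM : (Matrix.of fun i j : Fin (m + 1) =>
        if (i : ℕ) = 0 then
          Real.log (‖a j‖ / b j ⟨m + 1 - 1, by omega⟩)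
        else
          Real.log (b j ⟨(i : ℕ) - 1, by have := i.isLt; omega⟩ / b j ⟨m + 1 - 1, by omega⟩))
      = M' + replicateRow _ (w ᵥ* M') := by
    ext i j
    rw [Matrix.add_apply, replicateRow_apply, hwM']
    simp only [of_apply]
    split_ifs with hi <;> simp only [hM', of_apply, if_pos, hi] <;>
      rw [Real.log_div (by simp [ha, hb]) (hb _ _)] <;> rfl
  rw [hM, det_add_replicateRow_vecMul, Fin.sum_cons]
  congr 1
  simp
  ring
end

section
/- Let k be a number field of degree n = r + 2 over ℚ with r ≥ 1, and let τ_1, ..., τ_{n-1} be pairwise distinct field embeddings of k into ℂ such that τ_1 is not real (its image is not contained in ℝ) and τ_2, ..., τ_{n-1} are all real (each has image contained in ℝ). Define J̃ : k → ℂ × ℝ^r by J̃(v) := (τ_1(v), τ_2(v), ..., τ_{n-1}(v)). Then for any elements v_1, ..., v_ℓ ∈ k with ℓ < n, the vector e_{r+2} := (0, 0, ..., 0, 1) ∈ ℂ × ℝ^r (zero in the complex coordinate and in the first r-1 real coordinates, 1 in the last real coordinate) does NOT lie in the real span ℝ·J̃(v_1) + ... + ℝ·J̃(v_ℓ) ⊆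 ℂ × ℝ^r. -/
/-!
Since `ℓ < n = [k : ℚ]`, some `a ≠ 0` in `k` satisfies `Tr (a vᵢ) = 0` for all `i`. The embeddings
of `k` into `ℂ` are `τ₁`, its conjugate and `τ₂, …, τₙ₋₁`, so `x ↦ Tr (a x)` is the composite of
`J̃` with the real linear form `(z, y) ↦ 2 Re (τ₁(a) z) + ∑ⱼ τⱼ₊₁(a) yⱼ` on `ℂ × ℝ^r`. This form
vanishes on every `J̃(vᵢ)`, hence on their span, but takes the value `τₙ₋₁(a) ≠ 0` at `e_{r+2}`.
-/

open Module NumberField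

theorem Algebra.exists_ne_zero_forall_trace_mul_eq_zero {K L : Type*} [Field K] [CommRing L]
    [Algebra K L] [FiniteDimensional K L] {ℓ : ℕ} (hℓ : ℓ < finrank K L) (v : Fin ℓ → L) :
    ∃ a : L, a ≠ 0 ∧ ∀ i, Algebra.trace K L (a * v i) = 0 := by
  let f : L →ₗ[K] Fin ℓ → K :=
    LinearMap.pi fun i => Algebra.trace K L ∘ₗ LinearMap.mulRight K (v i)
  obtain ⟨a, ha, ha0⟩ := Submodule.exists_mem_ne_zero_of_ne_bot <|
    LinearMap.ker_ne_bot_of_finrank_lt (f := f) (by simpa using hℓ)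
  exact ⟨a, ha0, fun i => congrFun (LinearMap.mem_ker.mp ha) i⟩

namespace NumberField

variable {r : ℕ} {k : Type*} [Field k]

theorem algebraMap_trace_eq_sum_ringHom [NumberField k] (x : k) :
    algebraMap ℚ ℂ (Algebra.trace ℚ k x) = ∑ φ : k →+* ℂ, φ x := by
  rw [trace_eq_sum_embeddings ℂ]
  exact Fintype.sum_equiv (RingHom.equivRatAlgHom k ℂ).symm _ _ fun _ => rfl

theorem algebraMap_trace_eq_sum_of_injective [NumberField k] {ι : Type*} [Fintype ι]
    {f : ι → (k →+* ℂ)} (hf : Function.Injective f) (hcard : Fintype.card ι = finrank ℚ k) (x : k) :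
    algebraMap ℚ ℂ (Algebra.trace ℚ k x) = ∑ i, f i x := by
  have hbij : Function.Bijective f := by
    rwa [Fintype.bijective_iff_injective_and_card, Embeddings.card, and_iff_left hcard]
  rw [algebraMap_trace_eq_sum_ringHom]
  exact (Fintype.sum_bijective f hbij _ _ fun _ => rfl).symm

variable {τ : Fin (r + 1) → (k →+* ℂ)}

theorem conjugate_notMem_range (h0 : ∃ x : k, (τ 0 x).im ≠ 0)
    (hreal : ∀ i : Fin (r + 1), i ≠ 0 → ∀ x : k, (τ i x).im = 0) :
    ComplexEmbedding.conjugate (τ 0) ∉ Set.range τ := by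
  rintro ⟨i, hi⟩
  obtain ⟨x, hx⟩ := h0
  have him : (τ i x).im = -(τ 0 x).im := by
    rw [hi, ComplexEmbedding.conjugate_coe_eq, Complex.conj_im]
  rcases eq_or_ne i 0 with rfl | hi0
  · exact hx (by linarith)
  · exact hx (by linarith [hreal i hi0 x])

/-- By counting, the embeddings of `k` into `ℂ` are exactly `τ 0`, its conjugate and the real
embeddings `τ 1, …, τ r`. -/
theorem trace_eq_two_mul_re_add_sum_re [NumberField k] (hdeg : finrank ℚ k = r + 2)
    (hinj : Function.Injective τ) (h0 : ∃ x : k, (τ 0 x).im ≠ 0)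
    (hreal : ∀ i : Fin (r + 1), i ≠ 0 → ∀ x : k, (τ i x).im = 0) (x : k) :
    (Algebra.trace ℚ k x : ℝ) = 2 * (τ 0 x).re + ∑ j : Fin r, (τ j.succ x).re := by
  have h := algebraMap_trace_eq_sum_of_injective
    (Fin.snoc_injective_of_injective hinj (conjugate_notMem_range h0 hreal))
    (by rw [Fintype.card_fin, hdeg]) x
  rw [Fin.sum_univ_castSucc, Fin.sum_univ_succ] at h
  simp only [Fin.snoc_castSucc, Fin.snoc_last, ComplexEmbedding.conjugate_coe_eq] at h
  have := congrArg Complex.re h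
  simpa [Complex.re_sum, two_mul, add_comm, add_left_comm, add_assoc] using this

/-- The paper's `J̃`. -/
def twistedEmbedding (τ : Fin (r + 1) → (k →+* ℂ)) (x : k) : ℂ × (Fin r → ℝ) :=
  (τ 0 x, fun j => (τ j.succ x).re)

noncomputable def traceForm (τ : Fin (r + 1) → (k →+* ℂ)) (a : k) :
    ℂ × (Fin r → ℝ) →ₗ[ℝ] ℝ :=
  (2 : ℝ) • Complex.reLm ∘ₗ LinearMap.mulLeft ℝ (τ 0 a) ∘ₗ LinearMap.fst ℝ ℂ (Fin r → ℝ) +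
    Fintype.linearCombination ℝ (fun j => (τ j.succ a).re) ∘ₗ LinearMap.snd ℝ ℂ (Fin r → ℝ)

theorem traceForm_apply (a : k) (z : ℂ) (y : Fin r → ℝ) :
    traceForm τ a (z, y) = 2 * (τ 0 a * z).re + ∑ j, y j * (τ j.succ a).re := by
  simp [traceForm, Fintype.linearCombination_apply]

theorem traceForm_twistedEmbedding [NumberField k] (hdeg : finrank ℚ k = r + 2)
    (hinj : Function.Injective τ) (h0 : ∃ x : k, (τ 0 x).im ≠ 0)
    (hreal : ∀ i : Fin (r + 1), i ≠ 0 → ∀ x : k, (τ i x).im = 0) (a x : k) :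
    traceForm τ a (twistedEmbedding τ x) = Algebra.trace ℚ k (a * x) := by
  rw [twistedEmbedding, traceForm_apply, trace_eq_two_mul_re_add_sum_re hdeg hinj h0 hreal,
    map_mul]
  congr 1
  refine Finset.sum_congr rfl fun j _ => ?_
  simp [Complex.mul_re, hreal j.succ (Fin.succ_ne_zero j), mul_comm]

end NumberField

theorem stmt15 (r : ℕ) (hr : 1 ≤ r) (k : Type*) [Field k] [NumberField k]
    (hdeg : Module.finrank ℚ k = r + 2)
    (τ : Fin (r + 1) → (k →+* ℂ))
    (hinj : Function.Injective τ)
    (h0 : ∃ x : k, (τ 0 x).im ≠ 0)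
    (hreal : ∀ i : Fin (r + 1), i ≠ 0 → ∀ x : k, (τ i x).im = 0)
    (ℓ : ℕ) (hℓ : ℓ < r + 2) (v : Fin ℓ → k) :
    (((0 : ℂ), (Pi.single (⟨r - 1, by omega⟩ : Fin r) (1 : ℝ) : Fin r → ℝ)) :
        ℂ × (Fin r → ℝ)) ∉
      Submodule.span ℝ (Set.range (fun i : Fin ℓ =>
        ((τ 0 (v i), fun j : Fin r => (τ j.succ (v i)).re) : ℂ × (Fin r → ℝ)))) := by
  let p : Fin r := ⟨r - 1, by omega⟩
  obtain ⟨a, ha0, htr⟩ := Algebra.exists_ne_zero_forall_trace_mul_eq_zero (hdeg ▸ hℓ) v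
  have hker : Submodule.span ℝ (Set.range (twistedEmbedding τ ∘ v)) ≤
      LinearMap.ker (traceForm τ a) := by
    rw [Submodule.span_le]
    rintro _ ⟨i, rfl⟩
    simp [traceForm_twistedEmbedding hdeg hinj h0 hreal, htr]
  intro hmem
  have hzero := hker hmem
  rw [LinearMap.mem_ker, traceForm_apply] at hzero
  simp only [Complex.zero_re, mul_zero, Pi.single_apply, ite_mul, one_mul, zero_mul,
    Finset.sum_ite_eq', Finset.mem_univ, if_true, zero_add] at hzero
  exact ha0 <| (map_eq_zero (τ p.succ)).mp <|
    Complex.ext hzero (hreal p.succ (Fin.succ_ne_zero p) a)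
end

section
/- Let k be a number field with exactly one pair of complex-conjugate (non-real) embeddings into ℂ and at least one real embedding. Let ε be a unit of the ring of integers of k such that σ(ε) > 0 for every real embedding σ : k → ℝ, and assume that |τ(ε)| takes the same value for all embeddings τ : k → ℂ. Then ε = 1. -/
/-!
The absolute values of a unit at all complex embeddings multiply to `|N(ε)| = 1`, so their common
value is `1`. At a real embedding `σ` this gives `|σ ε| = 1`, and positivity forces `σ ε = 1`.
-/

open NumberField InfinitePlace

theorem NumberField.Units.eq_one_of_forall_norm_embedding_eq {K : Type*} [Field K]
    [NumberField K] (u : (𝓞 K)ˣ) {c : ℝ} (h : ∀ φ : K →+* ℂ, ‖φ u‖ = c) : c = 1 := by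
  have hplace (w : InfinitePlace K) : w u = c := by rw [← norm_embedding_eq, h]
  have hpow : c ^ Module.finrank ℚ K = 1 := by
    rw [← sum_mult_eq, ← Finset.prod_pow_eq_pow_sum, ← Rat.cast_one (α := ℝ),
      ← Units.norm K u, ← prod_eq_abs_norm]
    simp only [hplace]
  have hc : 0 ≤ c := h (Classical.arbitrary _) ▸ norm_nonneg _
  exact (pow_eq_one_iff_of_nonneg hc Module.finrank_pos.ne').mp hpow

theorem stmt16_general (k : Type*) [Field k] [NumberField k]
    (hrealemb : Nonempty (k →+* ℝ))
    (ε : (NumberField.RingOfIntegers k)ˣ)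
    (hpos : ∀ σ : k →+* ℝ, 0 < σ (algebraMap (NumberField.RingOfIntegers k) k ε))
    (habs : ∃ c : ℝ, ∀ τ : k →+* ℂ,
      ‖τ (algebraMap (NumberField.RingOfIntegers k) k ε)‖ = c) :
    ε = 1 := by
  obtain ⟨σ⟩ := hrealemb
  obtain ⟨c, hc⟩ := habs
  have hc1 : c = 1 := Units.eq_one_of_forall_norm_embedding_eq ε hc
  have hσ : |σ ε| = 1 := by
    rw [← hc1, ← hc (Complex.ofRealHom.comp σ)]
    simp
  have hσ1 : σ ε = 1 := by rwa [abs_of_pos (hpos σ)] at hσ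
  exact Units.coe_injective k (σ.injective (hσ1.trans (map_one σ).symm))

theorem stmt16 (k : Type*) [Field k] [NumberField k]
    (hcomplex : Nat.card {τ : k →+* ℂ // ∃ x : k, (τ x).im ≠ 0} = 2)
    (hrealemb : Nonempty (k →+* ℝ))
    (ε : (NumberField.RingOfIntegers k)ˣ)
    (hpos : ∀ σ : k →+* ℝ, 0 < σ (algebraMap (NumberField.RingOfIntegers k) k ε))
    (habs : ∃ c : ℝ, ∀ τ : k →+* ℂ,
      ‖τ (algebraMap (NumberField.RingOfIntegers k) k ε)‖ = c) :
    ε = 1 :=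
  stmt16_general k hrealemb ε hpos habs
end
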